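/- For a triangle T with vertices P₁, P₂, P₃ and a linear function B on T, the boundary integral identity ∮_{∂T} ½ B² n dl = |T| B̄ ∇B holds componentwise, where B̄ is the average of B over T and n is the outward unit normal; equivalently, the divergence theorem applied to ½B² gives ∮ ½B² n dl = ∫_T B ∇B dA = |T| B̄ ∇B since ∇B is constant. -/

import Mathlib

/-!
Both sides are computed in closed form. On an edge from `P` to `Q`, `B` restricted to the
segment is affine in the parameter, so `∫₀¹ ½ B² = (B(P)² + B(P) B(Q) + B(Q)²) / 6`.
On the triangle, the affine chart from the unit triangle has Jacobian `2|T|`, whence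
`∫_T B = |T| (B(P₁) + B(P₂) + B(P₃)) / 3`. What remains is a polynomial identity in the
vertices and the coefficients of `B`.
-/

open MeasureTheory

/-- Boundary integral of `½B²` on an edge of a polygon: the contribution of the edge
from `P` to `Q` (traversed counterclockwise), as a vector `∫ ½B² n dl`, where
`n dl = (dy, −dx)`. -/
noncomputable def edgeInt9 (B : ℝ × ℝ → ℝ) (P Q : ℝ × ℝ) : ℝ × ℝ :=
  (∫ s in (0:ℝ)..1, (1 / 2) * (B (P + s • (Q - P))) ^ 2) • (Q.2 - P.2, -(Q.1 - P.1))

open Set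

theorem integral_quadratic (c₀ c₁ c₂ b : ℝ) :
    ∫ s in (0:ℝ)..b, (c₀ + c₁ * s + c₂ * s ^ 2) =
      c₀ * b + c₁ * b ^ 2 / 2 + c₂ * b ^ 3 / 3 := by
  have hi (f : ℝ → ℝ) (hf : Continuous f) : IntervalIntegrable f volume 0 b :=
    hf.intervalIntegrable _ _
  rw [intervalIntegral.integral_add (hi _ (by fun_prop)) (hi _ (by fun_prop)),
    intervalIntegral.integral_add (hi _ (by fun_prop)) (hi _ (by fun_prop)),
    intervalIntegral.integral_const_mul, intervalIntegral.integral_const_mul,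
    intervalIntegral.integral_const, integral_id, integral_pow, smul_eq_mul]
  ring

section ChangeOfVariables

variable {E F : Type*} [NormedAddCommGroup E] [NormedSpace ℝ E] [FiniteDimensional ℝ E]
  [MeasurableSpace E] [BorelSpace E] [NormedAddCommGroup F] [NormedSpace ℝ F]

theorem ContinuousAffineMap.setIntegral_image (μ : Measure E) [μ.IsAddHaarMeasure]
    (f : E →ᴬ[ℝ] E) (hf : f.contLinear.det ≠ 0) {s : Set E} (hs : MeasurableSet s)
    (g : E → F) :
    ∫ x in f '' s, g x ∂μ = |f.contLinear.det| • ∫ x in s, g (f x) ∂μ := by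
  have hinj : Function.Injective f := by
    have hlin : Function.Injective f.contLinear :=
      ((Module.End.isUnit_iff _).1 ((LinearMap.isUnit_iff_isUnit_det _).2 hf.isUnit)).1
    exact (AffineMap.linear_injective_iff f.toAffineMap).1 hlin
  rw [integral_image_eq_integral_abs_det_fderiv_smul μ hs (fun x _ => f.hasFDerivWithinAt)
    hinj.injOn, integral_smul]

end ChangeOfVariables

def unitTriangle : Set (ℝ × ℝ) := {p | 0 ≤ p.1 ∧ 0 ≤ p.2 ∧ p.1 + p.2 ≤ 1}

theorem convex_unitTriangle : Convex ℝ unitTriangle := by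
  rintro x ⟨hx₁, hx₂, hx₃⟩ y ⟨hy₁, hy₂, hy₃⟩ s t hs ht hst
  refine ⟨?_, ?_, ?_⟩ <;>
    simp only [Prod.fst_add, Prod.snd_add, Prod.smul_fst, Prod.smul_snd, smul_eq_mul] <;>
    nlinarith

theorem convexHull_unitTriangle_vertices :
    convexHull ℝ {0, (1, 0), (0, 1)} = unitTriangle := by
  refine (convexHull_min ?_ convex_unitTriangle).antisymm fun p ⟨hx, hy, hxy⟩ => ?_
  · rintro p (rfl | rfl | rfl) <;> simp [unitTriangle]
  · have hcomb := (convex_convexHull ℝ {0, (1, 0), (0, 1)}).sum_mem (t := Finset.univ)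
      (w := ![1 - p.1 - p.2, p.1, p.2]) (z := ![(0 : ℝ × ℝ), (1, 0), (0, 1)])
      (by simp [Fin.forall_fin_succ, hx, hy]; linarith) (by simp [Fin.sum_univ_three]; ring)
      (by simp [Fin.forall_fin_succ, subset_convexHull ℝ _ _])
    simpa [Fin.sum_univ_three] using hcomb

theorem isCompact_unitTriangle : IsCompact unitTriangle :=
  convexHull_unitTriangle_vertices ▸ (toFinite _).isCompact_convexHull (𝕜 := ℝ)

theorem measurableSet_unitTriangle : MeasurableSet unitTriangle :=
  isCompact_unitTriangle.isClosed.measurableSet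

theorem integral_indicator_unitTriangle_fiber (f : ℝ × ℝ → ℝ) (x : ℝ) :
    ∫ y, unitTriangle.indicator f (x, y) =
      (Icc 0 1).indicator (fun x => ∫ y in (0:ℝ)..(1 - x), f (x, y)) x := by
  by_cases hx : x ∈ Icc (0:ℝ) 1
  · rw [indicator_of_mem hx, intervalIntegral.integral_of_le (by linarith [hx.2]),
      ← integral_Icc_eq_integral_Ioc, ← integral_indicator measurableSet_Icc]
    congr 1 with y
    simp only [indicator_apply, unitTriangle, mem_Icc]
    congr 1
    exact propext ⟨fun ⟨_, h₂, h₃⟩ => ⟨h₂, by linarith⟩,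
      fun ⟨h₂, h₃⟩ => ⟨hx.1, h₂, by linarith⟩⟩
  · rw [indicator_of_notMem hx, ← integral_zero ℝ ℝ]
    congr 1 with y
    exact indicator_of_notMem (fun h => hx ⟨h.1, by linarith [h.2.1, h.2.2]⟩) _

theorem setIntegral_unitTriangle {f : ℝ × ℝ → ℝ} (hf : Continuous f) :
    ∫ p in unitTriangle, f p = ∫ x in (0:ℝ)..1, ∫ y in (0:ℝ)..(1 - x), f (x, y) := by
  have hint : Integrable (unitTriangle.indicator f) (volume.prod volume) :=
    (integrable_indicator_iff measurableSet_unitTriangle).2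
      (hf.continuousOn.integrableOn_compact isCompact_unitTriangle)
  rw [← integral_indicator measurableSet_unitTriangle, Measure.volume_eq_prod,
    integral_prod _ hint]
  simp only [integral_indicator_unitTriangle_fiber]
  rw [integral_indicator measurableSet_Icc, integral_Icc_eq_integral_Ioc,
    ← intervalIntegral.integral_of_le zero_le_one]

theorem integral_unitTriangle_affine (c d e : ℝ) :
    ∫ p in unitTriangle, (c + d * p.1 + e * p.2) = c / 2 + d / 6 + e / 6 := by
  rw [setIntegral_unitTriangle (by fun_prop)]
  have hinner (x : ℝ) : ∫ y in (0:ℝ)..(1 - x), (c + d * x + e * y) =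
      (c + e / 2) + (d - c - e) * x + (e / 2 - d) * x ^ 2 := by
    have h := integral_quadratic (c + d * x) e 0 (1 - x)
    simp only [zero_mul, add_zero] at h
    rw [h]
    ring
  simp only [hinner, integral_quadratic]
  ring

section TriangleChart

variable {E : Type*} [NormedAddCommGroup E] [NormedSpace ℝ E]

noncomputable def triangleChart (P₁ P₂ P₃ : E) : (ℝ × ℝ) →ᴬ[ℝ] E :=
  ((ContinuousLinearMap.fst ℝ ℝ ℝ).smulRight (P₂ - P₁) +
      (ContinuousLinearMap.snd ℝ ℝ ℝ).smulRight (P₃ - P₁)).toContinuousAffineMap +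
    ContinuousAffineMap.const ℝ _ P₁

theorem triangleChart_apply (P₁ P₂ P₃ : E) (p : ℝ × ℝ) :
    triangleChart P₁ P₂ P₃ p = P₁ + p.1 • (P₂ - P₁) + p.2 • (P₃ - P₁) := by
  simp only [triangleChart, ContinuousAffineMap.coe_add,
    ContinuousLinearMap.coe_toContinuousAffineMap, FunLike.coe_add, ContinuousAffineMap.coe_const,
    Pi.add_apply, ContinuousLinearMap.smulRight_apply, ContinuousLinearMap.coe_fst',
    ContinuousLinearMap.coe_snd', Function.const_apply]
  abel

theorem triangleChart_contLinear (P₁ P₂ P₃ : E) :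
    (triangleChart P₁ P₂ P₃).contLinear =
      (ContinuousLinearMap.fst ℝ ℝ ℝ).smulRight (P₂ - P₁) +
        (ContinuousLinearMap.snd ℝ ℝ ℝ).smulRight (P₃ - P₁) := by
  simp [triangleChart]

theorem triangleChart_image_unitTriangle (P₁ P₂ P₃ : E) :
    triangleChart P₁ P₂ P₃ '' unitTriangle = convexHull ℝ {P₁, P₂, P₃} := by
  rw [← convexHull_unitTriangle_vertices]
  simpa [image_insert_eq, triangleChart_apply] using
    (triangleChart P₁ P₂ P₃).toAffineMap.image_convexHull {0, (1, 0), (0, 1)}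

end TriangleChart

theorem det_triangleChart (P₁ P₂ P₃ : ℝ × ℝ) :
    (triangleChart P₁ P₂ P₃).contLinear.det =
      (P₂.1 - P₁.1) * (P₃.2 - P₁.2) - (P₃.1 - P₁.1) * (P₂.2 - P₁.2) := by
  rw [ContinuousLinearMap.det, ← LinearMap.det_toMatrix (Module.Basis.finTwoProd ℝ),
    Matrix.det_fin_two]
  simp [triangleChart_contLinear, LinearMap.toMatrix_apply]

theorem setIntegral_convexHull_triangle_of_affine (P₁ P₂ P₃ : ℝ × ℝ) (a : ℝ) (g : ℝ × ℝ)
    (B : ℝ × ℝ → ℝ) (hB : ∀ x, B x = a + g.1 * x.1 + g.2 * x.2)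
    (hdet : (P₂.1 - P₁.1) * (P₃.2 - P₁.2) - (P₃.1 - P₁.1) * (P₂.2 - P₁.2) ≠ 0) :
    ∫ x in convexHull ℝ {P₁, P₂, P₃}, B x =
      |(P₂.1 - P₁.1) * (P₃.2 - P₁.2) - (P₃.1 - P₁.1) * (P₂.2 - P₁.2)| / 2 *
        ((B P₁ + B P₂ + B P₃) / 3) := by
  have hB_chart (p : ℝ × ℝ) : B (triangleChart P₁ P₂ P₃ p) =
      B P₁ + (B P₂ - B P₁) * p.1 + (B P₃ - B P₁) * p.2 := by
    simp only [hB, triangleChart_apply, Prod.fst_add, Prod.snd_add, Prod.smul_fst,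
      Prod.smul_snd, Prod.fst_sub, Prod.snd_sub, smul_eq_mul]
    ring
  rw [← triangleChart_image_unitTriangle,
    ContinuousAffineMap.setIntegral_image volume _ (det_triangleChart P₁ P₂ P₃ ▸ hdet)
      measurableSet_unitTriangle, det_triangleChart]
  simp only [hB_chart, integral_unitTriangle_affine, smul_eq_mul]
  ring

theorem edgeInt9_of_affine (a : ℝ) (g : ℝ × ℝ) (B : ℝ × ℝ → ℝ)
    (hB : ∀ x, B x = a + g.1 * x.1 + g.2 * x.2) (P Q : ℝ × ℝ) :
    edgeInt9 B P Q = ((B P ^ 2 + B P * B Q + B Q ^ 2) / 6) • (Q.2 - P.2, -(Q.1 - P.1)) := by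
  have hB_edge (s : ℝ) : (1 / 2) * B (P + s • (Q - P)) ^ 2 =
      B P ^ 2 / 2 + B P * (B Q - B P) * s + (B Q - B P) ^ 2 / 2 * s ^ 2 := by
    simp only [hB, Prod.fst_add, Prod.snd_add, Prod.smul_fst, Prod.smul_snd,
      Prod.fst_sub, Prod.snd_sub, smul_eq_mul]
    ring
  simp only [edgeInt9, hB_edge, integral_quadratic]
  congr 1
  ring

/-- For a nondegenerate (counterclockwise) triangle `T = conv{P₁,P₂,P₃}` and an affine
function `B(x) = a + g·x`, the boundary integral identity
`∮_{∂T} ½ B² n dl = |T| B̄ ∇B` holds, where `B̄ = (1/|T|) ∫_T B dA` and `∇B = g`. -/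
theorem stmt9 (P1 P2 P3 : ℝ × ℝ) (a : ℝ) (g : ℝ × ℝ)
    (B : ℝ × ℝ → ℝ) (hB : ∀ x, B x = a + g.1 * x.1 + g.2 * x.2)
    (A : ℝ)
    (hA : A = (1 / 2) * ((P2.1 - P1.1) * (P3.2 - P1.2) - (P3.1 - P1.1) * (P2.2 - P1.2)))
    (hApos : 0 < A)
    (Bbar : ℝ)
    (hBbar : Bbar = (1 / A) * ∫ x in convexHull ℝ ({P1, P2, P3} : Set (ℝ × ℝ)), B x) :
    edgeInt9 B P1 P2 + edgeInt9 B P2 P3 + edgeInt9 B P3 P1 = (A * Bbar) • g := by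
  have hdet : (P2.1 - P1.1) * (P3.2 - P1.2) - (P3.1 - P1.1) * (P2.2 - P1.2) = 2 * A := by
    rw [hA]; ring
  have hABbar : A * Bbar = A * ((B P1 + B P2 + B P3) / 3) := by
    rw [hBbar, setIntegral_convexHull_triangle_of_affine P1 P2 P3 a g B hB
      (by rw [hdet]; positivity), hdet, abs_of_pos (by positivity)]
    field_simp
  rw [edgeInt9_of_affine a g B hB, edgeInt9_of_affine a g B hB, edgeInt9_of_affine a g B hB,
    hABbar, hB P1, hB P2, hB P3, hA]
  ext <;>
    simp only [Prod.fst_add, Prod.snd_add, Prod.smul_fst, Prod.smul_snd, smul_eq_mul] <;>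
    ring
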